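/- arXiv:0909.1626 — 7 statements merged into one kernel-verified Lean document; each statement's English description precedes it below -/
import Mathlib

section
/- Let q be a prime power, m ≥ 1, and 1 ≤ l ≤ m-1. Let M_{m,l} denote the set of all squarefree monomials of degree l in variables y_1,...,y_m, let σ_l denote the l-th elementary symmetric polynomial in y_1,...,y_m, and let E_q = {y_1^q - y_1, ..., y_m^q - y_m}. Then every monomial in M_{m,l} belongs to the ideal of F_q[y_1,...,y_m] generated by M_{m,l+1} ∪ {σ_l} ∪ E_q. -/
open MvPolynomial

/-- The set of field equations `y_i^q - y_i`. -/
def fieldEqs (F : Type) [Field F] [Fintype F] (m : ℕ) : Set (MvPolynomial (Fin m) F) :=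
  {p | ∃ i : Fin m, p = X i ^ Fintype.card F - X i}

/-- The set of squarefree monomials of degree `t` in `m` variables. -/
def sqfMonomials (F : Type) [Field F] [Fintype F] (m t : ℕ) : Set (MvPolynomial (Fin m) F) :=
  {p | ∃ s : Finset (Fin m), s.card = t ∧ p = ∏ i ∈ s, X i}

/-!
Write `q = n + 1`. Modulo the field equations `∏_{i ∈ s} y_i ≡ ∏_{i ∈ s} y_i^q`, and
`σ_l · ∏_{i ∈ s} y_i^n = ∏_{i ∈ s} y_i^q + ∑_{t ≠ s} (∏_{i ∈ t} y_i) · ∏_{i ∈ s} y_i^n`.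
Each term with `t ≠ s`, `|t| = |s|`, picks up some `y_j` with `j ∈ s \ t` from the second
factor, so it is a multiple of the squarefree monomial of degree `l + 1` on `t ∪ {j}`.
-/

open Finset

theorem Finset.prod_insert_dvd_prod_mul_prod_pow {ι M : Type*} [CommMonoid M] [DecidableEq ι]
    (f : ι → M) {s t : Finset ι} {j : ι} (hjs : j ∈ s) (hjt : j ∉ t) {n : ℕ} (hn : n ≠ 0) :
    ∏ i ∈ insert j t, f i ∣ (∏ i ∈ t, f i) * ∏ i ∈ s, f i ^ n := by
  rw [prod_insert hjt, ← mul_prod_erase s _ hjs, mul_comm (f j)]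
  exact mul_dvd_mul_left _ (dvd_mul_of_dvd_left (dvd_pow_self _ hn) _)

namespace MvPolynomial

variable {σ R : Type*} [CommRing R] [Fintype σ] [DecidableEq σ]

theorem esymm_card_mul_prod_X_pow (s : Finset σ) (n : ℕ) :
    esymm σ R #s * ∏ i ∈ s, X i ^ n =
      ∏ i ∈ s, X i ^ (n + 1) +
        ∑ t ∈ (powersetCard #s univ).erase s, (∏ i ∈ t, X i) * ∏ i ∈ s, X i ^ n := by
  rw [esymm, sum_mul, ← add_sum_erase _ _ (mem_powersetCard.mpr ⟨subset_univ s, rfl⟩),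
    ← prod_mul_distrib]
  simp only [← pow_succ']

theorem prod_X_mem_of_esymm_mem {I : Ideal (MvPolynomial σ R)} {l n : ℕ} (hn : n ≠ 0)
    (hfield : ∀ i, X i ^ (n + 1) - X i ∈ I)
    (hsqf : ∀ t : Finset σ, #t = l + 1 → ∏ i ∈ t, X i ∈ I)
    (hesymm : esymm σ R l ∈ I) {s : Finset σ} (hs : #s = l) :
    ∏ i ∈ s, X i ∈ I := by
  subst hs
  have hpow : ∏ i ∈ s, X i - ∏ i ∈ s, X i ^ (n + 1) ∈ I :=
    SModEq.sub_mem.mp <| SModEq.prod fun i _ => (SModEq.sub_mem.mpr (hfield i)).symm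
  have hoff : ∑ t ∈ (powersetCard #s univ).erase s, (∏ i ∈ t, X i) * ∏ i ∈ s, X i ^ n ∈ I := by
    refine sum_mem fun t ht => ?_
    obtain ⟨hts, ht⟩ := mem_erase.mp ht
    have hcard : #t = #s := (mem_powersetCard.mp ht).2
    obtain ⟨j, hjs, hjt⟩ := not_subset.mp fun hst => hts (eq_of_subset_of_card_le hst hcard.le).symm
    exact Ideal.mem_of_dvd _ (prod_insert_dvd_prod_mul_prod_pow X hjs hjt hn)
      (hsqf _ (by rw [card_insert_of_notMem hjt, hcard]))
  rw [← sub_add_cancel (∏ i ∈ s, X i) (∏ i ∈ s, X i ^ (n + 1))]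
  refine add_mem hpow ?_
  rw [eq_sub_of_add_eq (esymm_card_mul_prod_X_pow s n).symm]
  exact sub_mem (Ideal.mul_mem_right _ _ hesymm) hoff

end MvPolynomial

theorem stmt0_general (F : Type) [Field F] [Fintype F] (m l : ℕ) :
    ∀ p ∈ sqfMonomials F m l,
      p ∈ Ideal.span (sqfMonomials F m (l + 1) ∪ {esymm (Fin m) F l} ∪ fieldEqs F m) := by
  rintro _ ⟨s, hs, rfl⟩
  have hq : Fintype.card F - 1 + 1 = Fintype.card F := Nat.sub_add_cancel Fintype.card_pos
  refine prod_X_mem_of_esymm_mem (n := Fintype.card F - 1)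
    (Nat.sub_ne_zero_of_lt Fintype.one_lt_card) (fun i => ?_)
    (fun t ht => Ideal.subset_span (Or.inl (Or.inl ⟨t, ht, rfl⟩)))
    (Ideal.subset_span (Or.inl (Or.inr rfl))) hs
  rw [hq]
  exact Ideal.subset_span (Or.inr ⟨i, rfl⟩)

theorem stmt0 (F : Type) [Field F] [Fintype F] (m l : ℕ) (hm : 1 ≤ m)
    (hl1 : 1 ≤ l) (hl2 : l ≤ m - 1) :
    ∀ p ∈ sqfMonomials F m l,
      p ∈ Ideal.span (sqfMonomials F m (l + 1) ∪ {esymm (Fin m) F l} ∪ fieldEqs F m) :=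
  stmt0_general F m l
end

section
/- Let q be a prime power, m ≥ 1, and 2 ≤ t ≤ m. Then the ideal I_{m,t} = ⟨{σ_t, ..., σ_m} ∪ E_q[Y]⟩ of F_q[y_1,...,y_m] equals the ideal generated by E_q[Y] ∪ M_{m,t}. -/
open MvPolynomial

/-- The set of elementary symmetric polynomials `σ_t, ..., σ_m`. -/
def esymmRange (F : Type) [Field F] [Fintype F] (m t : ℕ) : Set (MvPolynomial (Fin m) F) :=
  {p | ∃ j : ℕ, t ≤ j ∧ j ≤ m ∧ p = esymm (Fin m) F j}


/-!
Every ideal of `F[y₁, …, yₘ]` containing the field equations `yᵢ^q - yᵢ` is determined by its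
zero set in `Fᵐ`: a polynomial vanishing on `Fᵐ` reduces to one of degree `< q` in each variable
that still vanishes, hence is zero; and interpolating with the indicator polynomials of points
shows `p ∈ I` as soon as every point where `p` is nonzero is a non-zero of some element of `I`.
Both ideals of the theorem have the same zero set, the points with fewer than `t` nonzero
coordinates: a point whose nonzero coordinates form a set `S` has `σ_{|S|}` equal to `∏_{i ∈ S} yᵢ`
there, and kills all `σ_j` with `j > |S|`.
-/

universe u

/-- The exponent `≤ q - 1` to which `x ^ q = x` reduces `x ^ n`. -/
def reduceExp (q n : ℕ) : ℕ := if n = 0 then 0 else (n - 1) % (q - 1) + 1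

theorem reduceExp_zero (q : ℕ) : reduceExp q 0 = 0 := if_pos rfl

theorem reduceExp_le {q : ℕ} (hq : 2 ≤ q) (n : ℕ) : reduceExp q n ≤ q - 1 := by
  unfold reduceExp
  split_ifs
  · omega
  · have := Nat.mod_lt (n - 1) (show 0 < q - 1 by omega)
    omega

theorem pow_add_mul_pred_eq {M : Type*} [Monoid M] {x : M} {q : ℕ} (hx : x ^ q = x) (n k : ℕ) :
    x ^ (n + 1 + k * (q - 1)) = x ^ (n + 1) := by
  induction k with
  | zero => simp
  | succ k ih =>
    rcases Nat.eq_zero_or_pos q with rfl | hq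
    · simp
    calc x ^ (n + 1 + (k + 1) * (q - 1))
        = x ^ (n + k * (q - 1)) * x ^ q := by rw [← pow_add]; congr 1; rw [add_mul]; omega
      _ = x ^ (n + 1 + k * (q - 1)) := by rw [hx, ← pow_succ]; congr 1; omega
      _ = x ^ (n + 1) := ih

theorem pow_reduceExp {M : Type*} [Monoid M] {x : M} {q : ℕ} (hx : x ^ q = x) (n : ℕ) :
    x ^ reduceExp q n = x ^ n := by
  unfold reduceExp
  split_ifs with hn
  · rw [hn]
  · rw [← pow_add_mul_pred_eq hx _ ((n - 1) / (q - 1))]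
    congr 1
    have := Nat.mod_add_div (n - 1) (q - 1)
    rw [mul_comm] at this
    omega

namespace MvPolynomial

variable {σ F : Type u} [Field F] [Fintype F]

theorem exists_mem_restrictDegree_sub_mem {I : Ideal (MvPolynomial σ F)}
    (hI : ∀ i, X i ^ Fintype.card F - X i ∈ I) (p : MvPolynomial σ F) :
    ∃ r ∈ restrictDegree σ F (Fintype.card F - 1), p - r ∈ I := by
  have hq : 2 ≤ Fintype.card F := Fintype.one_lt_card
  induction p using MvPolynomial.induction_on' with
  | monomial d c =>
    refine ⟨monomial (d.mapRange (reduceExp (Fintype.card F)) (reduceExp_zero _)) c, ?_, ?_⟩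
    · rw [mem_restrictDegree]
      intro s hs i
      rw [Finset.mem_singleton.mp (support_monomial_subset hs), Finsupp.mapRange_apply]
      exact reduceExp_le hq _
    · have hX (i : σ) :
          Ideal.Quotient.mk I (X i) ^ Fintype.card F = Ideal.Quotient.mk I (X i) := by
        rw [← map_pow, Ideal.Quotient.eq]
        exact hI i
      rw [← Ideal.Quotient.eq, monomial_eq, monomial_eq, Finsupp.prod_mapRange_index (by simp)]
      simp only [map_mul, Finsupp.prod, map_prod, map_pow, pow_reduceExp (hX _)]
  | add p p' hp hp' =>
    obtain ⟨r, hr, hpr⟩ := hp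
    obtain ⟨r', hr', hpr'⟩ := hp'
    refine ⟨r + r', add_mem hr hr', ?_⟩
    rw [add_sub_add_comm]
    exact add_mem hpr hpr'

theorem mem_of_forall_eval_eq_zero [Finite σ] {I : Ideal (MvPolynomial σ F)}
    (hI : ∀ i, X i ^ Fintype.card F - X i ∈ I) {p : MvPolynomial σ F}
    (hp : ∀ a, eval a p = 0) : p ∈ I := by
  set J := Ideal.span (Set.range fun i : σ => (X i ^ Fintype.card F - X i : MvPolynomial σ F))
  obtain ⟨r, hr, hpr⟩ :=
    exists_mem_restrictDegree_sub_mem (I := J) (fun i => Ideal.subset_span ⟨i, rfl⟩) p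
  have hJ (a : σ → F) : J ≤ RingHom.ker (eval a) := by
    rw [Ideal.span_le]
    rintro _ ⟨i, rfl⟩
    simp [FiniteField.pow_card]
  have hr0 : r = 0 := by
    refine eq_zero_of_eval_eq_zero σ F r (fun a => ?_) hr
    have := hJ a hpr
    rwa [RingHom.mem_ker, map_sub, hp, zero_sub, neg_eq_zero] at this
  rw [hr0, sub_zero] at hpr
  exact Ideal.span_le.mpr (by rintro _ ⟨i, rfl⟩; exact hI i) hpr

theorem mem_of_forall_eval_ne_zero [Fintype σ] {I : Ideal (MvPolynomial σ F)}
    (hI : ∀ i, X i ^ Fintype.card F - X i ∈ I) {p : MvPolynomial σ F}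
    (hp : ∀ a, eval a p ≠ 0 → ∃ g ∈ I, eval a g ≠ 0) : p ∈ I := by
  classical
  have hg (a : σ → F) : ∃ g ∈ I, eval a p ≠ 0 → eval a g ≠ 0 := by
    by_cases ha : eval a p = 0
    · exact ⟨0, zero_mem I, fun h => absurd ha h⟩
    · obtain ⟨g, hgI, hga⟩ := hp a ha
      exact ⟨g, hgI, fun _ => hga⟩
  choose g hgI hga using hg
  set h := ∑ a, C (eval a p / eval a (g a)) * indicator a * g a
  have hh : h ∈ I := Ideal.sum_mem _ fun a _ => Ideal.mul_mem_left _ _ (hgI a)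
  have hph : ∀ b, eval b (p - h) = 0 := by
    intro b
    rw [map_sub, map_sum, Finset.sum_eq_single b]
    · simp only [map_mul, eval_C, eval_indicator_apply_eq_one, mul_one]
      rw [div_mul_cancel_of_imp (fun h0 => not_not.mp fun hb => hga b hb h0), sub_self]
    · intro a _ hab
      simp [eval_indicator_apply_eq_zero b a (Ne.symm hab)]
    · simp
  simpa using add_mem (mem_of_forall_eval_eq_zero hI hph) hh

theorem eval_esymm_card_eq_prod {σ R : Type*} [Fintype σ] [CommSemiring R]
    (a : σ → R) (s : Finset σ) (hs : ∀ i ∉ s, a i = 0) :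
    eval a (esymm σ R s.card) = ∏ i ∈ s, a i := by
  rw [esymm, map_sum, Finset.sum_eq_single s]
  · simp
  · intro A hA hAs
    rw [Finset.mem_powersetCard] at hA
    obtain ⟨i, hiA, his⟩ : ∃ i ∈ A, i ∉ s := Finset.not_subset.mp fun hsub =>
      hAs (Finset.eq_of_subset_of_card_le hsub hA.2.ge)
    simp [map_prod, Finset.prod_eq_zero hiA, hs i his]
  · simp

end MvPolynomial

open Finset

theorem prod_X_mem_span_esymmRange (F : Type) [Field F] [Fintype F] {m t : ℕ}
    (s : Finset (Fin m)) (hs : #s = t) :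
    ∏ i ∈ s, X i ∈ Ideal.span (esymmRange F m t ∪ fieldEqs F m) := by
  classical
  refine mem_of_forall_eval_ne_zero (fun i => Ideal.subset_span (Or.inr ⟨i, rfl⟩)) fun a ha => ?_
  set S := univ.filter fun i => a i ≠ 0
  have hsS : s ⊆ S := fun i hi => by
    rw [map_prod, prod_ne_zero_iff] at ha
    simpa [S] using ha i hi
  have hσ : esymm (Fin m) F #S ∈ esymmRange F m t :=
    ⟨#S, hs ▸ card_le_card hsS, card_le_univ S |>.trans (by simp), rfl⟩
  refine ⟨_, Ideal.subset_span (Or.inl hσ), ?_⟩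
  rw [eval_esymm_card_eq_prod a S (by simp [S]), prod_ne_zero_iff]
  exact fun i hi => (mem_filter.mp hi).2

theorem esymm_mem_span_sqfMonomials (F : Type) [Field F] [Fintype F] {m t j : ℕ} (htj : t ≤ j) :
    esymm (Fin m) F j ∈ Ideal.span (fieldEqs F m ∪ sqfMonomials F m t) := by
  refine Ideal.sum_mem _ fun A hA => ?_
  obtain ⟨B, hBA, hB⟩ := exists_subset_card_eq (htj.trans (mem_powersetCard.mp hA).2.ge)
  rw [← prod_sdiff hBA]
  exact Ideal.mul_mem_left _ _ (Ideal.subset_span (Or.inr ⟨B, hB, rfl⟩))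

theorem stmt1_general (F : Type) [Field F] [Fintype F] (m t : ℕ) :
    Ideal.span (esymmRange F m t ∪ fieldEqs F m) =
      Ideal.span (fieldEqs F m ∪ sqfMonomials F m t) := by
  apply le_antisymm <;> rw [Ideal.span_le]
  · rintro _ (⟨j, htj, -, rfl⟩ | hp)
    · exact esymm_mem_span_sqfMonomials F htj
    · exact Ideal.subset_span (Or.inl hp)
  · rintro _ (hp | ⟨s, hs, rfl⟩)
    · exact Ideal.subset_span (Or.inr hp)
    · exact prod_X_mem_span_esymmRange F s hs

theorem stmt1 (F : Type) [Field F] [Fintype F] (m t : ℕ) (hm : 1 ≤ m)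
    (ht1 : 2 ≤ t) (ht2 : t ≤ m) :
    Ideal.span (esymmRange F m t ∪ fieldEqs F m) =
      Ideal.span (fieldEqs F m ∪ sqfMonomials F m t) :=
  stmt1_general F m t
end

section
/- Let q be a prime power and m ≥ 1. The ideal of F_q[y_1,...,y_m] generated by {σ_1, ..., σ_m} ∪ E_q[Y] equals the ideal ⟨y_1, ..., y_m⟩. -/
open MvPolynomial

/-- The set of elementary symmetric polynomials `σ_1, ..., σ_m`. -/
def esymmAll (F : Type) [Field F] [Fintype F] (m : ℕ) : Set (MvPolynomial (Fin m) F) :=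
  {p | ∃ j : ℕ, 1 ≤ j ∧ j ≤ m ∧ p = esymm (Fin m) F j}

theorem pow_pow_eq_self_of_pow_eq_self {M : Type*} [Monoid M] {x : M} {q : ℕ} (hx : x ^ q = x)
    (n : ℕ) : x ^ q ^ n = x := by
  induction n with
  | zero => simp
  | succ n ih => rw [pow_succ, pow_mul, ih, hx]

theorem eq_zero_of_pow_eq_self_of_isNilpotent {M : Type*} [MonoidWithZero M] {x : M} {q : ℕ}
    (hq : 2 ≤ q) (hx : x ^ q = x) (hnil : IsNilpotent x) : x = 0 := by
  obtain ⟨n, hn⟩ := hnil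
  rw [← pow_pow_eq_self_of_pow_eq_self hx n]
  exact pow_eq_zero_of_le (Nat.lt_pow_self hq).le hn

namespace MvPolynomial

variable {σ R : Type*}

theorem span_range_X_eq_ker_constantCoeff [CommSemiring R] :
    Ideal.span (Set.range X) = RingHom.ker (constantCoeff : MvPolynomial σ R →+* R) := by
  refine le_antisymm (Ideal.span_le.2 ?_) fun p hp => ?_
  · rintro _ ⟨i, rfl⟩
    simp
  · rw [← Set.image_univ, mem_ideal_span_X_image]
    intro d hd
    have hd0 : d ≠ 0 := by
      rintro rfl
      exact mem_support_iff.1 hd (by simpa [constantCoeff_eq] using hp)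
    obtain ⟨i, hi⟩ := Finsupp.ne_iff.1 hd0
    exact ⟨i, Set.mem_univ i, hi⟩

theorem constantCoeff_esymm [CommSemiring R] [Fintype σ] {n : ℕ} (hn : n ≠ 0) :
    constantCoeff (esymm σ R n) = 0 := by
  rw [esymm, map_sum]
  refine Finset.sum_eq_zero fun t ht => ?_
  obtain ⟨i, hi⟩ := Finset.card_pos.1 <| (Finset.mem_powersetCard.1 ht).2 ▸ Nat.pos_of_ne_zero hn
  rw [map_prod]
  exact Finset.prod_eq_zero hi (constantCoeff_X R i)

theorem X_pow_card_mem_of_esymm_mem [CommRing R] [Fintype σ] {I : Ideal (MvPolynomial σ R)}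
    (hI : ∀ j, 1 ≤ j → j ≤ Fintype.card σ → esymm σ R j ∈ I) (i : σ) :
    X i ^ Fintype.card σ ∈ I := by
  set n := Fintype.card σ
  have hroot : (∏ k, (Polynomial.X + Polynomial.C (X k))).eval (-X i : MvPolynomial σ R) = 0 := by
    rw [Polynomial.eval_prod]
    exact Finset.prod_eq_zero (Finset.mem_univ i) (by simp)
  rw [prod_C_add_X_eq_sum_esymm, Polynomial.eval_finsetSum, Finset.sum_range_succ'] at hroot
  simp only [Polynomial.eval_mul, Polynomial.eval_C, Polynomial.eval_pow, Polynomial.eval_X,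
    esymm_zero, Nat.sub_zero, one_mul] at hroot
  have hneg : (-X i) ^ n ∈ I := by
    rw [eq_neg_of_add_eq_zero_right hroot]
    refine neg_mem (Ideal.sum_mem _ fun j hj => Ideal.mul_mem_right _ _ (hI _ j.succ_pos ?_))
    exact Finset.mem_range.1 hj
  have := I.mul_mem_left ((-1) ^ n) hneg
  rwa [← mul_pow, neg_one_mul, neg_neg] at this

end MvPolynomial

theorem stmt2_general (F : Type) [Field F] [Fintype F] (m : ℕ) :
    Ideal.span (esymmAll F m ∪ fieldEqs F m) =
      Ideal.span {p : MvPolynomial (Fin m) F | ∃ i : Fin m, p = X i} := by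
  have hq : 2 ≤ Fintype.card F := Fintype.one_lt_card
  have hX : {p : MvPolynomial (Fin m) F | ∃ i : Fin m, p = X i} = Set.range X :=
    Set.ext fun _ => exists_congr fun _ => eq_comm
  rw [hX]
  refine le_antisymm ?_ (Ideal.span_le.2 ?_)
  · rw [span_range_X_eq_ker_constantCoeff, Ideal.span_le]
    rintro p (⟨j, hj, -, rfl⟩ | ⟨i, rfl⟩)
    · exact constantCoeff_esymm (by omega)
    · simp [zero_pow (by omega : Fintype.card F ≠ 0)]
  · rintro _ ⟨i, rfl⟩
    set I := Ideal.span (esymmAll F m ∪ fieldEqs F m)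
    rw [SetLike.mem_coe, ← Ideal.Quotient.eq_zero_iff_mem]
    refine eq_zero_of_pow_eq_self_of_isNilpotent hq ?_ ⟨m, ?_⟩
    · rw [← map_pow, Ideal.Quotient.eq]
      exact Ideal.subset_span (Or.inr ⟨i, rfl⟩)
    · rw [← map_pow, Ideal.Quotient.eq_zero_iff_mem]
      simpa using X_pow_card_mem_of_esymm_mem
        (fun j hj1 hj2 => Ideal.subset_span (Or.inl ⟨j, hj1, by simpa using hj2, rfl⟩)) i

theorem stmt2 (F : Type) [Field F] [Fintype F] (m : ℕ) (hm : 1 ≤ m) :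
    Ideal.span (esymmAll F m ∪ fieldEqs F m) =
      Ideal.span {p : MvPolynomial (Fin m) F | ∃ i : Fin m, p = X i} :=
  stmt2_general F m
end

section
/- Let q be a prime power, m ≥ 1, and 0 ≤ t ≤ m-1. Let Q_t = {c ∈ F_q^m : w(c) ≤ t} where w denotes Hamming weight. Then a point a ∈ F_q^m is a common zero of σ_{t+1}, ..., σ_m if and only if a ∈ Q_t. Equivalently, the vanishing ideal I(Q_t) ⊆ F_q[y_1,...,y_m] equals ⟨{σ_{t+1},...,σ_m} ∪ E_q[Y]⟩. -/
/-!
At a point `a` only the monomials of `σ_j` supported inside `supp a` survive, so `σ_j(a) = 0`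
for `j > w(a)` while `σ_{w(a)}(a)` is the product of the nonzero coordinates of `a`. Hence
`Q_t` is the common zero set of `σ_{t+1}, …, σ_m`, and each point outside `Q_t` is separated
from `Q_t` by one of them.

For the ideal, the combinatorial Nullstellensatz with every coordinate ranging over `F_q`
shows that `⟨E_q[Y]⟩` is the vanishing ideal of `F_q^m`, so modulo `E_q[Y]` every polynomial
is the interpolation `∑ₐ p(a) · 1_a` of its values. If `p` vanishes on `Q_t`, only the
indicators `1_a` with `a ∉ Q_t` occur, and `1_a ≡ g(a)⁻¹ g · 1_a` for any generator `g` with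
`g(a) ≠ 0`.
-/

open MvPolynomial

namespace Polynomial

theorem prod_univ_X_sub_C_eq_X_pow_card_sub_X (F : Type*) [Field F] [Fintype F] :
    ∏ r : F, (X - C r) = (X ^ Fintype.card F - X : F[X]) := by
  have hmonic : (X ^ Fintype.card F - X : F[X]).Monic :=
    monic_X_pow_sub (by rw [degree_X]; exact_mod_cast Fintype.one_lt_card)
  have hcard : Multiset.card (X ^ Fintype.card F - X : F[X]).roots
      = (X ^ Fintype.card F - X : F[X]).natDegree := by
    simp [FiniteField.roots_X_pow_card_sub_X,
      FiniteField.X_pow_card_sub_X_natDegree_eq F Fintype.one_lt_card]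
  simpa [FiniteField.roots_X_pow_card_sub_X] using
    prod_multiset_X_sub_C_of_monic_of_roots_card_eq hmonic hcard

end Polynomial

namespace MvPolynomial

variable {σ F : Type*} [Field F] [Fintype F]

theorem prod_univ_X_sub_C_eq_X_pow_card_sub_X (i : σ) :
    ∏ r : F, (X i - C r : MvPolynomial σ F) = X i ^ Fintype.card F - X i := by
  simpa [map_prod] using
    congrArg (Polynomial.aeval (X i : MvPolynomial σ F))
      (Polynomial.prod_univ_X_sub_C_eq_X_pow_card_sub_X F)

end MvPolynomial

section FieldEquations

variable {F : Type} [Field F] [Fintype F] {m : ℕ}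

theorem eval_eq_zero_of_mem_span_fieldEqs {p : MvPolynomial (Fin m) F}
    (hp : p ∈ Ideal.span (fieldEqs F m)) (a : Fin m → F) : eval a p = 0 := by
  rw [← RingHom.mem_ker]
  refine (Ideal.span_le.2 ?_) hp
  rintro _ ⟨i, rfl⟩
  simp [FiniteField.pow_card]

theorem mem_span_fieldEqs_of_forall_eval_eq_zero {p : MvPolynomial (Fin m) F}
    (hp : ∀ a, eval a p = 0) : p ∈ Ideal.span (fieldEqs F m) := by
  obtain ⟨h, -, rfl⟩ := combinatorial_nullstellensatz_exists_linearCombination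
    (fun _ ↦ Finset.univ) (fun _ ↦ Finset.univ_nonempty) p (fun a _ ↦ hp a)
  rw [Finsupp.linearCombination_apply]
  refine Ideal.sum_mem _ fun i _ ↦ Ideal.mul_mem_left _ _ (Ideal.subset_span ⟨i, ?_⟩)
  exact prod_univ_X_sub_C_eq_X_pow_card_sub_X i

theorem sub_mem_span_fieldEqs_of_eval_eq {p r : MvPolynomial (Fin m) F}
    (h : ∀ a, eval a p = eval a r) : p - r ∈ Ideal.span (fieldEqs F m) :=
  mem_span_fieldEqs_of_forall_eval_eq_zero fun a ↦ by rw [map_sub, h, sub_self]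

theorem sub_sum_indicator_mem_span_fieldEqs (p : MvPolynomial (Fin m) F) :
    p - ∑ a, C (eval a p) * indicator a ∈ Ideal.span (fieldEqs F m) := by
  refine sub_mem_span_fieldEqs_of_eval_eq fun b ↦ ?_
  rw [map_sum, Finset.sum_eq_single b, map_mul, eval_C, eval_indicator_apply_eq_one, mul_one]
  · intro a _ hab
    rw [map_mul, eval_indicator_apply_eq_zero b a hab.symm, mul_zero]
  · exact fun hb ↦ absurd (Finset.mem_univ b) hb

theorem indicator_mem_span_of_eval_ne_zero {G : Set (MvPolynomial (Fin m) F)}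
    {g : MvPolynomial (Fin m) F} (hg : g ∈ G) {a : Fin m → F} (ha : eval a g ≠ 0) :
    indicator a ∈ Ideal.span (G ∪ fieldEqs F m) := by
  have hdiff : indicator a - C (eval a g)⁻¹ * g * indicator a ∈ Ideal.span (fieldEqs F m) := by
    refine sub_mem_span_fieldEqs_of_eval_eq fun b ↦ ?_
    by_cases hb : b = a
    · subst hb
      simp [eval_indicator_apply_eq_one, ha]
    · simp [eval_indicator_apply_eq_zero b a hb]
  rw [← sub_add_cancel (indicator a) (C (eval a g)⁻¹ * g * indicator a)]
  refine add_mem (Ideal.span_mono Set.subset_union_right hdiff) ?_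
  exact Ideal.mul_mem_right _ _ (Ideal.mul_mem_left _ _ (Ideal.subset_span (Or.inl hg)))

theorem vanishingIdeal_eq_span_union_fieldEqs {S : Set (Fin m → F)}
    {G : Set (MvPolynomial (Fin m) F)} (hG : ∀ g ∈ G, ∀ a ∈ S, eval a g = 0)
    (hsep : ∀ a ∉ S, ∃ g ∈ G, eval a g ≠ 0) :
    vanishingIdeal F S = Ideal.span (G ∪ fieldEqs F m) := by
  apply le_antisymm
  · intro p hp
    replace hp : ∀ a ∈ S, eval a p = 0 := hp
    rw [← sub_add_cancel p (∑ a, C (eval a p) * indicator a)]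
    refine add_mem (Ideal.span_mono Set.subset_union_right (sub_sum_indicator_mem_span_fieldEqs p))
      (Ideal.sum_mem _ fun a _ ↦ ?_)
    by_cases ha : a ∈ S
    · rw [hp a ha, C_0, zero_mul]
      exact zero_mem _
    · obtain ⟨g, hg, hga⟩ := hsep a ha
      exact Ideal.mul_mem_left _ _ (indicator_mem_span_of_eval_ne_zero hg hga)
  · refine Ideal.span_le.2 fun p hp a ha ↦ show eval a p = 0 from ?_
    rcases hp with hp | hp
    · exact hG p hp a ha
    · exact eval_eq_zero_of_mem_span_fieldEqs (Ideal.subset_span hp) a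

end FieldEquations

section Hamming

variable {F : Type} [Field F] [DecidableEq F] {m : ℕ}

theorem eval_esymm_eq_sum_powersetCard_support (a : Fin m → F) (j : ℕ) :
    eval a (esymm (Fin m) F j) =
      ∑ s ∈ Finset.powersetCard j {i | a i ≠ 0}, ∏ i ∈ s, a i := by
  rw [esymm, map_sum]
  simp only [map_prod, eval_X]
  symm
  refine Finset.sum_subset (Finset.powersetCard_mono (Finset.subset_univ _)) fun s hs hs' ↦ ?_
  have hsupp : ¬ s ⊆ ({i | a i ≠ 0} : Finset (Fin m)) := fun h ↦
    hs' (Finset.mem_powersetCard.2 ⟨h, (Finset.mem_powersetCard.1 hs).2⟩)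
  obtain ⟨i, hi, hai⟩ := Finset.not_subset.1 hsupp
  exact Finset.prod_eq_zero hi (by simpa using hai)

theorem eval_esymm_eq_zero_of_hammingNorm_lt {a : Fin m → F} {j : ℕ} (hj : hammingNorm a < j) :
    eval a (esymm (Fin m) F j) = 0 := by
  rw [eval_esymm_eq_sum_powersetCard_support, Finset.powersetCard_eq_empty.2 hj, Finset.sum_empty]

theorem eval_esymm_hammingNorm_ne_zero (a : Fin m → F) :
    eval a (esymm (Fin m) F (hammingNorm a)) ≠ 0 := by
  rw [eval_esymm_eq_sum_powersetCard_support, hammingNorm, Finset.powersetCard_self,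
    Finset.sum_singleton, Finset.prod_ne_zero_iff]
  simp

end Hamming

theorem stmt3_general (F : Type) [Field F] [Fintype F] [DecidableEq F] (m t : ℕ) :
    (∀ a : Fin m → F,
        (∀ j : ℕ, t + 1 ≤ j → j ≤ m → eval a (esymm (Fin m) F j) = 0) ↔ hammingNorm a ≤ t) ∧
    {p : MvPolynomial (Fin m) F | ∀ a : Fin m → F, hammingNorm a ≤ t → eval a p = 0} =
      (Ideal.span (esymmRange F m (t + 1) ∪ fieldEqs F m) : Set (MvPolynomial (Fin m) F)) := by
  have hweight (a : Fin m → F) : hammingNorm a ≤ m := by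
    simpa using hammingNorm_le_card_fintype (x := a)
  have hsep (a : Fin m → F) (ha : ¬ hammingNorm a ≤ t) :
      ∃ g ∈ esymmRange F m (t + 1), eval a g ≠ 0 :=
    ⟨_, ⟨_, Nat.lt_of_not_le ha, hweight a, rfl⟩, eval_esymm_hammingNorm_ne_zero a⟩
  refine ⟨fun a ↦ ⟨fun h ↦ ?_,
    fun ha j hj _ ↦ eval_esymm_eq_zero_of_hammingNorm_lt (by omega)⟩, ?_⟩
  · by_contra ha
    obtain ⟨_, ⟨j, hj, hjm, rfl⟩, hne⟩ := hsep a ha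
    exact hne (h j hj hjm)
  · rw [← vanishingIdeal_eq_span_union_fieldEqs (S := {a | hammingNorm a ≤ t}) ?_ hsep]
    · rfl
    · rintro _ ⟨j, hj, -, rfl⟩ a ha
      exact eval_esymm_eq_zero_of_hammingNorm_lt (by simp at ha; omega)

theorem stmt3 (F : Type) [Field F] [Fintype F] [DecidableEq F] (m t : ℕ)
    (hm : 1 ≤ m) (ht : t ≤ m - 1) :
    (∀ a : Fin m → F,
        (∀ j : ℕ, t + 1 ≤ j → j ≤ m → eval a (esymm (Fin m) F j) = 0) ↔ hammingNorm a ≤ t) ∧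
    {p : MvPolynomial (Fin m) F | ∀ a : Fin m → F, hammingNorm a ≤ t → eval a p = 0} =
      (Ideal.span (esymmRange F m (t + 1) ∪ fieldEqs F m) : Set (MvPolynomial (Fin m) F)) :=
  stmt3_general F m t
end

section
/- Let q be a prime power, 1 ≤ k < n, and let C be a systematic (n,k,q) code with associated functions f_1,...,f_{n-k}. For 1 ≤ t ≤ n, let V_t = {a ∈ F_q^k : m(a, f_1(a),...,f_{n-k}(a)) = 0 for all squarefree monomials m of degree t in n variables}. Let B_i denote the number of codewords of C with Hamming weight exactly i. Then for 2 ≤ t ≤ n, B_{t-1} = |V_t| - |V_{t-1}|. -/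
def cw (F : Type) [Field F] (n k : ℕ) (f : Fin (n - k) → (Fin k → F) → F)
    (a : Fin k → F) : Fin n → F :=
  fun j => if h : (j : ℕ) < k then a ⟨j, h⟩
    else f ⟨(j : ℕ) - k, by have := j.isLt; omega⟩ a

/-- `V t`: the messages `a` at whose codeword all squarefree monomials of degree `t` vanish. -/
def V (F : Type) [Field F] (n k : ℕ) (f : Fin (n - k) → (Fin k → F) → F) (t : ℕ) :
    Set (Fin k → F) :=
  {a | ∀ s : Finset (Fin n), s.card = t → ∏ j ∈ s, cw F n k f a j = 0}

lemma memV_iff (F : Type) [Field F] [Fintype F] [DecidableEq F] (n k : ℕ)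
    (f : Fin (n - k) → (Fin k → F) → F) (t : ℕ) (a : Fin k → F) :
    a ∈ V F n k f t ↔ hammingNorm (cw F n k f a) < t := by
  constructor
  · intro h
    by_contra hge
    push_neg at hge
    obtain ⟨s, hs, hcard⟩ := Finset.exists_subset_card_eq (n := t)
      (s := ({i | cw F n k f a i ≠ 0} : Finset (Fin n))) hge
    have := h s hcard
    rw [Finset.prod_eq_zero_iff] at this
    obtain ⟨i, hi, hi0⟩ := this
    exact (Finset.mem_filter.mp (hs hi)).2 hi0
  · intro h s hs
    by_contra hne
    replace hne := Finset.prod_ne_zero_iff.mp hne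
    have hsub : s ⊆ ({i | cw F n k f a i ≠ 0} : Finset (Fin n)) := by
      intro i hi
      simp only [Finset.mem_filter, Finset.mem_univ, true_and]
      exact hne i hi
    have := Finset.card_le_card hsub
    rw [hs] at this
    exact absurd (lt_of_le_of_lt this h) (lt_irrefl t)

lemma cw_inj (F : Type) [Field F] (n k : ℕ) (hkn : k ≤ n)
    (f : Fin (n - k) → (Fin k → F) → F) : Function.Injective (cw F n k f) := by
  intro a b hab
  funext i
  have : cw F n k f a ⟨i, lt_of_lt_of_le i.isLt hkn⟩ =
      cw F n k f b ⟨i, lt_of_lt_of_le i.isLt hkn⟩ := by rw [hab]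
  simpa [cw, i.isLt] using this

theorem stmt8 (F : Type) [Field F] [Fintype F] [DecidableEq F] (n k t : ℕ)
    (hk : 1 ≤ k) (hkn : k < n) (ht1 : 2 ≤ t) (ht2 : t ≤ n)
    (f : Fin (n - k) → (Fin k → F) → F) :
    Nat.card {c : Fin n → F // c ∈ Set.range (cw F n k f) ∧ hammingNorm c = t - 1} =
      Nat.card (V F n k f t) - Nat.card (V F n k f (t - 1)) := by
  have hinj := cw_inj F n k hkn.le f
  -- sets
  set W : (Fin k → F) → ℕ := fun a => hammingNorm (cw F n k f a) with hW
  have hVt : V F n k f t = {a | W a < t} := Set.ext fun a => memV_iff F n k f t a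
  have hVt1 : V F n k f (t - 1) = {a | W a < t - 1} :=
    Set.ext fun a => memV_iff F n k f (t - 1) a
  have himg : {c : Fin n → F | c ∈ Set.range (cw F n k f) ∧ hammingNorm c = t - 1}
      = cw F n k f '' {a | W a = t - 1} := by
    ext c
    constructor
    · rintro ⟨⟨a, rfl⟩, hc⟩
      exact ⟨a, hc, rfl⟩
    · rintro ⟨a, ha, rfl⟩
      exact ⟨⟨a, rfl⟩, ha⟩
  have h1 : Nat.card {c : Fin n → F // c ∈ Set.range (cw F n k f) ∧ hammingNorm c = t - 1}
      = Set.ncard {a | W a = t - 1} := by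
    rw [show {c : Fin n → F // c ∈ Set.range (cw F n k f) ∧ hammingNorm c = t - 1}
      = ↥{c : Fin n → F | c ∈ Set.range (cw F n k f) ∧ hammingNorm c = t - 1} from rfl,
      Nat.card_coe_set_eq, himg, Set.ncard_image_of_injective _ hinj]
  rw [h1, hVt, hVt1, Nat.card_coe_set_eq, Nat.card_coe_set_eq]
  have hdiff : {a | W a = t - 1} = {a : Fin k → F | W a < t} \ {a | W a < t - 1} := by
    ext a
    simp only [Set.mem_setOf_eq, Set.mem_diff, not_lt]
    omega
  rw [hdiff, Set.ncard_diff (fun a ha => by simp only [Set.mem_setOf_eq] at *; omega)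
    (Set.toFinite _)]
end

section
/- Let q be a prime power, 1 ≤ k < n, and let C be a systematic (n,k,q) code with associated functions f_1,...,f_{n-k}. With W_t and Δ_k as defined, W_t = Δ_k if and only if the minimum distance of C is at least t. -/
/-- `W t`: pairs of messages `(a, ã)` such that every squarefree monomial of degree `t`
in `n` variables vanishes at the difference vector of the corresponding codewords. -/
def W (F : Type) [Field F] (n k : ℕ) (f : Fin (n - k) → (Fin k → F) → F) (t : ℕ) :
    Set ((Fin k → F) × (Fin k → F)) :=
  {p | ∀ s : Finset (Fin n), s.card = t →
    ∏ j ∈ s, (cw F n k f p.1 j - cw F n k f p.2 j) = 0}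

/-- The diagonal `Δ_k`. -/
def diag (F : Type) [Field F] (k : ℕ) : Set ((Fin k → F) × (Fin k → F)) :=
  {p | p.1 = p.2}

/-! A product of coordinates of `x - y` over a `t`-subset is nonzero exactly when the subset
lies in the support of `x - y`, so `(a, ã) ∈ W_t` iff the codewords of `a` and `ã` are at
distance `< t`; the rest is injectivity of the systematic encoding. -/

theorem prod_sub_eq_zero_of_card_eq_iff_hammingDist_lt {ι R : Type*} [Fintype ι] [CommRing R]
    [IsDomain R] [DecidableEq R] (x y : ι → R) (t : ℕ) :
    (∀ s : Finset ι, s.card = t → ∏ j ∈ s, (x j - y j) = 0) ↔ hammingDist x y < t := by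
  classical
  rw [← not_iff_not, not_lt]
  push Not
  simp only [Finset.prod_ne_zero_iff, sub_ne_zero]
  constructor
  · rintro ⟨s, rfl, hs⟩
    exact Finset.card_le_card fun j hj => Finset.mem_filter.mpr ⟨Finset.mem_univ j, hs j hj⟩
  · intro h
    obtain ⟨s, hsub, rfl⟩ := Finset.exists_subset_card_eq h
    exact ⟨s, rfl, fun j hj => (Finset.mem_filter.mp (hsub hj)).2⟩

theorem cw_injective {F : Type} [Field F] {n k : ℕ} (f : Fin (n - k) → (Fin k → F) → F)
    (hkn : k ≤ n) : Function.Injective (cw F n k f) := by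
  intro a b h
  funext i
  simpa [cw] using congrFun h ⟨i, i.isLt.trans_le hkn⟩

theorem mem_W_iff {F : Type} [Field F] [DecidableEq F] {n k t : ℕ}
    {f : Fin (n - k) → (Fin k → F) → F} {p : (Fin k → F) × (Fin k → F)} :
    p ∈ W F n k f t ↔ hammingDist (cw F n k f p.1) (cw F n k f p.2) < t :=
  prod_sub_eq_zero_of_card_eq_iff_hammingDist_lt _ _ t

theorem diag_subset_W {F : Type} [Field F] {n k t : ℕ} (f : Fin (n - k) → (Fin k → F) → F)
    (ht : 1 ≤ t) : diag F k ⊆ W F n k f t := by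
  classical
  rintro ⟨a, b⟩ (rfl : a = b)
  rw [mem_W_iff, hammingDist_self]
  exact ht

theorem stmt10_general (F : Type) [Field F] [DecidableEq F] (n k t : ℕ)
    (hkn : k < n) (ht1 : 1 ≤ t)
    (f : Fin (n - k) → (Fin k → F) → F) :
    W F n k f t = diag F k ↔
      ∀ a b : Fin k → F, cw F n k f a ≠ cw F n k f b →
        t ≤ hammingDist (cw F n k f a) (cw F n k f b) := by
  rw [Set.Subset.antisymm_iff, and_iff_left (diag_subset_W f ht1)]
  simp only [Set.subset_def, Prod.forall, mem_W_iff, diag, Set.mem_ofPred_eq,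
    ← (cw_injective f hkn.le).eq_iff]
  exact forall₂_congr fun a b => by rw [← not_lt]; exact not_imp_not.symm

theorem stmt10 (F : Type) [Field F] [Fintype F] [DecidableEq F] (n k t : ℕ)
    (hk : 1 ≤ k) (hkn : k < n) (ht1 : 1 ≤ t) (ht2 : t ≤ n)
    (f : Fin (n - k) → (Fin k → F) → F) :
    W F n k f t = diag F k ↔
      ∀ a b : Fin k → F, cw F n k f a ≠ cw F n k f b →
        t ≤ hammingDist (cw F n k f a) (cw F n k f b) :=
  stmt10_general F n k t hkn ht1 f
end

section
/- Let q be a prime power, m ≥ 1, and 1 ≤ t ≤ m. Every squarefree monomial of degree t in y_1,...,y_m belongs to the ideal of F_q[y_1,...,y_m] generated by {σ_t, σ_{t+1}, ..., σ_m} ∪ {y_1^q - y_1, ..., y_m^q - y_m}. -/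
open MvPolynomial

/-!
Descending induction on `|u| ≥ t`. Multiplying `σ_{|u|} = ∑_{|v| = |u|} y_v` by `y_u^{q-1}`
gives `y_u^q` plus terms `y_v y_u^{q-1}` with `v ≠ u`, each a multiple of the longer squarefree
monomial `y_{u ∪ v}`, which lies in the ideal by induction. Hence `y_u^q` lies in the ideal,
and so does `y_u ≡ y_u^q` modulo the field equations.
-/

open Finset

theorem Finset.prod_pow_sub_prod_mem {ι R : Type*} [CommRing R] {I : Ideal R} {f : ι → R}
    {n : ℕ} (u : Finset ι) (h : ∀ i ∈ u, f i ^ n - f i ∈ I) :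
    ∏ i ∈ u, f i ^ n - ∏ i ∈ u, f i ∈ I := by
  rw [← Ideal.Quotient.eq, map_prod, map_prod]
  exact prod_congr rfl fun i hi => Ideal.Quotient.eq.2 (h i hi)

theorem Finset.prod_union_dvd_prod_mul_prod_pow {ι M : Type*} [CommMonoid M] [DecidableEq ι]
    (f : ι → M) (u v : Finset ι) {n : ℕ} (hn : n ≠ 0) :
    ∏ i ∈ v ∪ u, f i ∣ (∏ i ∈ v, f i) * ∏ i ∈ u, f i ^ n := by
  rw [← union_sdiff_self_eq_union, prod_union disjoint_sdiff]
  refine mul_dvd_mul dvd_rfl ((prod_dvd_prod_of_dvd _ _ fun i _ => dvd_pow_self (f i) hn).trans ?_)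
  exact prod_dvd_prod_of_subset _ _ _ sdiff_subset

namespace MvPolynomial

variable {σ R : Type*} [Fintype σ] [CommRing R] {I : Ideal (MvPolynomial σ R)}

theorem esymm_card_mul_prod_X_pow_sub_mem (u : Finset σ) {n : ℕ} (hn : n ≠ 0)
    (hsup : ∀ w : Finset σ, u ⊂ w → ∏ i ∈ w, X i ∈ I) :
    esymm σ R #u * ∏ i ∈ u, X i ^ n - ∏ i ∈ u, X i ^ (n + 1) ∈ I := by
  classical
  have hu : u ∈ powersetCard #u (univ : Finset σ) := mem_powersetCard.2 ⟨subset_univ u, rfl⟩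
  have hlead : (∏ i ∈ u, X i) * ∏ i ∈ u, X i ^ n =
      ∏ i ∈ u, (X i : MvPolynomial σ R) ^ (n + 1) := by
    simp only [← prod_mul_distrib, pow_succ']
  rw [esymm, sum_mul, ← add_sum_erase _ _ hu, hlead, add_sub_cancel_left]
  refine Ideal.sum_mem _ fun v hv => ?_
  obtain ⟨hvu, hv⟩ := mem_erase.1 hv
  have hcard : #v = #u := (mem_powersetCard.1 hv).2
  have hsub : u ⊂ v ∪ u := by
    refine ssubset_of_subset_of_ne subset_union_right fun h => hvu ?_
    exact eq_of_subset_of_card_le (h ▸ subset_union_left) hcard.ge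
  obtain ⟨r, hr⟩ := prod_union_dvd_prod_mul_prod_pow (X (R := R)) u v hn
  rw [hr]
  exact I.mul_mem_right r (hsup _ hsub)

theorem prod_X_mem_of_esymm_mem_s14 {q t : ℕ} (hq : 1 < q) (hX : ∀ i, X i ^ q - X i ∈ I)
    (hE : ∀ k, t ≤ k → k ≤ Fintype.card σ → esymm σ R k ∈ I) (u : Finset σ) (hu : t ≤ #u) :
    ∏ i ∈ u, X i ∈ I := by
  induction u using strongDownwardInduction (n := Fintype.card σ) with
  | H u ih hcard =>
    have hpow : ∏ i ∈ u, X i ^ q ∈ I := by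
      have hcomb := esymm_card_mul_prod_X_pow_sub_mem u (Nat.sub_ne_zero_of_lt hq)
        fun w huw => ih (card_le_univ w) huw (hu.trans (card_lt_card huw).le)
      rw [Nat.sub_add_cancel hq.le] at hcomb
      exact (I.sub_mem_iff_right (I.mul_mem_right _ (hE _ hu hcard))).1 hcomb
    exact (I.sub_mem_iff_right hpow).1 (prod_pow_sub_prod_mem u fun i _ => hX i)
  | _ => exact card_le_univ u

end MvPolynomial

theorem stmt14_general (F : Type) [Field F] [Fintype F] (m t : ℕ)
    (s : Finset (Fin m)) (hs : s.card = t) :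
    (∏ i ∈ s, X i : MvPolynomial (Fin m) F) ∈
      Ideal.span (esymmRange F m t ∪ fieldEqs F m) := by
  refine prod_X_mem_of_esymm_mem_s14 (Fintype.one_lt_card (α := F)) (fun i => ?_)
    (fun k hk hkm => ?_) s hs.ge
  · exact Ideal.subset_span (Or.inr ⟨i, rfl⟩)
  · exact Ideal.subset_span (Or.inl ⟨k, hk, by simpa using hkm, rfl⟩)

theorem stmt14 (F : Type) [Field F] [Fintype F] (m t : ℕ)
    (hm : 1 ≤ m) (ht1 : 1 ≤ t) (ht2 : t ≤ m)
    (s : Finset (Fin m)) (hs : s.card = t) :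
    (∏ i ∈ s, X i : MvPolynomial (Fin m) F) ∈
      Ideal.span (esymmRange F m t ∪ fieldEqs F m) :=
  stmt14_general F m t s hs
end
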